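/- Let T' and S' be rooted binary trees with the same leaf set X (|X| = N ≥ 2) and identical left-to-right leaf orderings, and suppose the left subtree of T' is at least as large as its right subtree. Then, for any constant C ≥ 4, at least one of the following holds: (i) there exist a node u of T', a node v of S', and a leaf x ∈ X with x ∉ Le(T'_u), x ∉ Le(S'_v), and |Le(T'_u) ∩ Le(S'_v)| ≥ N/C; or (ii) every subtree hanging off the path from the left-most leaf to the root of T', and every subtree hanging off the path from the root to the right-most leaf of S', has at most max(2N/C, 1) leaves. -/

import Mathlib

/-- Rooted binary trees with leaves labeled by `X` (with designated left/right children). -/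
inductive BTree (X : Type) where
  | leaf : X → BTree X
  | node : BTree X → BTree X → BTree X

namespace BTree

variable {X : Type} [DecidableEq X]

/-- Left-to-right (pre-order) leaf sequence. -/
def seq : BTree X → List X
  | leaf x => [x]
  | node l r => seq l ++ seq r

/-- Leaf set. -/
def leaves (t : BTree X) : Finset X := t.seq.toFinset

/-- Number of leaves. -/
def size (t : BTree X) : ℕ := t.seq.length

/-- A phylogenetic tree: leaves are bijectively labeled (no repeated labels). -/
def Phylo (t : BTree X) : Prop := t.seq.Nodup

def isLeaf : BTree X → Prop
  | leaf _ => True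
  | node _ _ => False

/-- A rooted caterpillar: every internal node (including the root) has a leaf child. -/
def isCaterpillar : BTree X → Prop
  | leaf _ => True
  | node l r => (isLeaf l ∧ isCaterpillar r) ∨ (isLeaf r ∧ isCaterpillar l)

/-- A perfectly balanced binary tree. -/
def isPerfect : BTree X → Prop
  | leaf _ => True
  | node l r => isPerfect l ∧ isPerfect r ∧ size l = size r

/-- Restriction `T|A`: minimal subtree spanning the leaves in `A`, with degree-two
vertices suppressed; `none` if `A` contains no leaf of the tree. -/
def restrict : BTree X → Finset X → Option (BTree X)
  | leaf x, A => if x ∈ A then some (leaf x) else none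
  | node l r, A =>
    match restrict l A, restrict r A with
    | some l', some r' => some (node l' r')
    | some l', none => some l'
    | none, some r' => some r'
    | none, none => none

/-- Nodes of a tree are addressed by root-paths: `false` = go left, `true` = go right.
`subtreeAt t p` is the subtree rooted at the node with address `p` (if it exists). -/
def subtreeAt : BTree X → List Bool → Option (BTree X)
  | t, [] => some t
  | leaf _, _ :: _ => none
  | node l _, false :: p => subtreeAt l p
  | node _ r, true :: p => subtreeAt r p

/-- Address of the least common ancestor of a set of leaves. -/
def lcaPos : BTree X → Finset X → List Bool
  | leaf _, _ => []
  | node l r, A =>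
    if A ⊆ l.leaves then false :: lcaPos l A
    else if A ⊆ r.leaves then true :: lcaPos r A
    else []

/-- `v ⪯ u` in the ancestor order iff the address of `u` is a prefix of the address of `v`.
Two nodes are incomparable if neither address is a prefix of the other. -/
def Incomp (p q : List Bool) : Prop := ¬ p <+: q ∧ ¬ q <+: p

/-- `StrictBelow p q`: the node at address `p` is a strict descendant of the node at `q`. -/
def StrictBelow (p q : List Bool) : Prop := q <+: p ∧ p ≠ q

/-- Identity of rooted phylogenetic trees: label-preserving graph isomorphism
(the left/right designation is irrelevant). -/
def REq : BTree X → BTree X → Prop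
  | leaf x, leaf y => x = y
  | node l r, node l' r' => (REq l l' ∧ REq r r') ∨ (REq l r' ∧ REq r l')
  | _, _ => False

/-- The splits (edge-induced leaf bipartitions, each recorded by both of its sides)
of the unrooted tree obtained by de-rooting `t`. -/
def usplits (t : BTree X) : Set (Finset X) :=
  { A | ∃ p u, t.subtreeAt p = some u ∧ (A = u.leaves ∨ A = t.leaves \ u.leaves) }

/-- `t` and `s` de-root to identical unrooted phylogenetic trees. -/
def UEq (t s : BTree X) : Prop := t.leaves = s.leaves ∧ usplits t = usplits s

/-- Rooted agreement of `t` and `s` on leaf set `A`: `t|A = s|A` as rooted trees. -/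
def RAgree (t s : BTree X) (A : Finset X) : Prop :=
  ∃ t' s', t.restrict A = some t' ∧ s.restrict A = some s' ∧ REq t' s'

/-- Unrooted agreement of (the de-rootings of) `t` and `s` on leaf set `A`. -/
def UAgree (t s : BTree X) (A : Finset X) : Prop :=
  ∃ t' s', t.restrict A = some t' ∧ s.restrict A = some s' ∧ UEq t' s'

/-- `t` de-roots to an unrooted caterpillar. -/
def UCaterpillar (t : BTree X) : Prop := ∃ c : BTree X, isCaterpillar c ∧ UEq c t

/-- The subtrees hanging off the path from the left-most leaf to the root
(`Q_1, …, Q_k` in the paper; `Q_1` is the left-most leaf itself). -/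
def leftSpine : BTree X → List (BTree X)
  | leaf x => [leaf x]
  | node l r => leftSpine l ++ [r]

/-- The subtrees hanging off the path from the root to the right-most leaf
(`R_1, …, R_m` in the paper; `R_m` is the right-most leaf itself). -/
def rightSpine : BTree X → List (BTree X)
  | leaf x => [leaf x]
  | node l r => l :: rightSpine r

/-- Graph distance (number of edges) between leaves `x` and `y` in the unrooted
tree obtained by de-rooting `t` (the suppressed root accounts for the `-1`). -/
def udist (t : BTree X) (x y : X) : ℕ :=
  (lcaPos t {x}).length - (lcaPos t {x, y}).length +
    ((lcaPos t {y}).length - (lcaPos t {x, y}).length) -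
    (if lcaPos t {x, y} = [] then 1 else 0)

end BTree

open BTree

/-!
Since the two trees induce the same leaf order, the leaf sets of the first children `tl`, `sl` of
their roots are nested prefixes, and those of the second children `tr`, `sr` nested suffixes.
If `sl` has at least `N/C` leaves, then `tl` (which has at least `N/2`) and `sl` share `N/C`
leaves and both miss the last leaf. Otherwise a spine subtree `q` with more than `2N/C` leaves is
not `sl`; if it is `tr`, it shares `N/C` leaves with the large `sr` and both miss the first leaf.
In the remaining cases `q` misses both the first and the last leaf, so whichever root child of
the other tree holds half of `q` works, the end leaf in the other root child lying outside both.
-/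

namespace BTree

section

variable {X : Type}

def firstLeaf : BTree X → X
  | leaf x => x
  | node l _ => firstLeaf l

def lastLeaf : BTree X → X
  | leaf x => x
  | node _ r => lastLeaf r

theorem head?_seq (t : BTree X) : t.seq.head? = some t.firstLeaf := by
  induction t with
  | leaf x => rfl
  | node l r ihl _ => simp [seq, firstLeaf, List.head?_append, ihl]

theorem getLast?_seq (t : BTree X) : t.seq.getLast? = some t.lastLeaf := by
  induction t with
  | leaf x => rfl
  | node l r _ ihr => simp [seq, lastLeaf, List.getLast?_append, ihr]

theorem firstLeaf_eq_of_seq_eq {t s : BTree X} (h : t.seq = s.seq) :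
    t.firstLeaf = s.firstLeaf :=
  Option.some_injective _ (by rw [← head?_seq, ← head?_seq, h])

theorem lastLeaf_eq_of_seq_eq {t s : BTree X} (h : t.seq = s.seq) :
    t.lastLeaf = s.lastLeaf :=
  Option.some_injective _ (by rw [← getLast?_seq, ← getLast?_seq, h])

theorem seq_ne_nil (t : BTree X) : t.seq ≠ [] := by
  simp [← List.head?_eq_none_iff, head?_seq]

theorem exists_eq_node_of_seq_eq {l r s : BTree X} (h : (node l r).seq = s.seq) :
    ∃ sl sr, s = node sl sr := by
  cases s with
  | node sl sr => exact ⟨sl, sr, rfl⟩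
  | leaf y =>
    have hlen := congrArg List.length h
    simp only [seq, List.length_append, List.length_singleton] at hlen
    have := List.length_pos_of_ne_nil (seq_ne_nil l)
    have := List.length_pos_of_ne_nil (seq_ne_nil r)
    omega

theorem exists_subtreeAt_of_mem_leftSpine {t q : BTree X} (hq : q ∈ t.leftSpine) :
    ∃ p, t.subtreeAt p = some q := by
  induction t with
  | leaf x => exact ⟨[], by simpa [leftSpine, subtreeAt, eq_comm] using hq⟩
  | node l r ihl _ =>
    simp only [leftSpine, List.mem_append, List.mem_singleton] at hq
    rcases hq with hq | rfl
    · obtain ⟨p, hp⟩ := ihl hq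
      exact ⟨false :: p, hp⟩
    · exact ⟨[true], by simp [subtreeAt]⟩

theorem exists_subtreeAt_of_mem_rightSpine {t q : BTree X} (hq : q ∈ t.rightSpine) :
    ∃ p, t.subtreeAt p = some q := by
  induction t with
  | leaf x => exact ⟨[], by simpa [rightSpine, subtreeAt, eq_comm] using hq⟩
  | node l r _ ihr =>
    simp only [rightSpine, List.mem_cons] at hq
    rcases hq with rfl | hq
    · exact ⟨[false], by simp [subtreeAt]⟩
    · obtain ⟨p, hp⟩ := ihr hq
      exact ⟨true :: p, hp⟩

theorem Phylo.left {l r : BTree X} (h : (node l r).Phylo) : l.Phylo :=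
  List.Nodup.of_append_left h

theorem Phylo.right {l r : BTree X} (h : (node l r).Phylo) : r.Phylo :=
  List.Nodup.of_append_right h

theorem Phylo.of_seq_eq {t s : BTree X} (ht : t.Phylo) (h : t.seq = s.seq) : s.Phylo := by
  unfold Phylo; rwa [← h]

end

variable {X : Type} [DecidableEq X]

theorem leaves_node (l r : BTree X) : (node l r).leaves = l.leaves ∪ r.leaves :=
  List.toFinset_append

theorem firstLeaf_mem_leaves (t : BTree X) : t.firstLeaf ∈ t.leaves :=
  List.mem_toFinset.2 (List.mem_of_head? (head?_seq t))

theorem lastLeaf_mem_leaves (t : BTree X) : t.lastLeaf ∈ t.leaves :=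
  List.mem_toFinset.2 (List.mem_of_getLast? (getLast?_seq t))

theorem leaves_subset_leaves {u v : BTree X} (h : u.seq ⊆ v.seq) : u.leaves ⊆ v.leaves :=
  fun _ hx => List.mem_toFinset.2 (h (List.mem_toFinset.1 hx))

theorem leaves_subset_of_subtreeAt {t u : BTree X} {p : List Bool}
    (h : t.subtreeAt p = some u) : u.leaves ⊆ t.leaves := by
  induction t generalizing p with
  | leaf x =>
    cases p with
    | nil => cases h; rfl
    | cons _ _ => cases h
  | node l r ihl ihr =>
    rcases p with _ | ⟨_ | _, p⟩
    · cases h; rfl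
    · exact (ihl h).trans (by rw [leaves_node]; exact Finset.subset_union_left)
    · exact (ihr h).trans (by rw [leaves_node]; exact Finset.subset_union_right)

theorem Phylo.disjoint_leaves {l r : BTree X} (h : (node l r).Phylo) :
    Disjoint l.leaves r.leaves :=
  List.disjoint_toFinset_iff_disjoint.2 (List.disjoint_of_nodup_append h)

theorem Phylo.card_leaves {t : BTree X} (h : t.Phylo) : t.leaves.card = t.size :=
  List.toFinset_card_of_nodup h

theorem Phylo.card_leaves_node {l r : BTree X} (h : (node l r).Phylo) :
    (node l r).leaves.card = l.leaves.card + r.leaves.card := by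
  rw [leaves_node, Finset.card_union_of_disjoint h.disjoint_leaves]

theorem firstLeaf_notMem_of_mem_leftSpine {t q : BTree X} (ht : t.Phylo)
    (hq : q ∈ t.leftSpine) (hq₁ : 1 < q.leaves.card) : t.firstLeaf ∉ q.leaves := by
  induction t with
  | leaf x =>
    simp only [leftSpine, List.mem_singleton] at hq
    subst hq
    simp [leaves, seq] at hq₁
  | node l r ihl _ =>
    simp only [leftSpine, List.mem_append, List.mem_singleton] at hq
    rcases hq with hq | rfl
    · exact ihl ht.left hq
    · exact Finset.disjoint_left.1 ht.disjoint_leaves (firstLeaf_mem_leaves l)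

theorem lastLeaf_notMem_of_mem_rightSpine {t q : BTree X} (ht : t.Phylo)
    (hq : q ∈ t.rightSpine) (hq₁ : 1 < q.leaves.card) : t.lastLeaf ∉ q.leaves := by
  induction t with
  | leaf x =>
    simp only [rightSpine, List.mem_singleton] at hq
    subst hq
    simp [leaves, seq] at hq₁
  | node l r _ ihr =>
    simp only [rightSpine, List.mem_cons] at hq
    rcases hq with rfl | hq
    · exact Finset.disjoint_right.1 ht.disjoint_leaves (lastLeaf_mem_leaves r)
    · exact ihr ht.right hq

end BTree

theorem Finset.min_card_le_card_inter_of_subset_or {α : Type*} [DecidableEq α]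
    {A B : Finset α} (h : A ⊆ B ∨ B ⊆ A) : min A.card B.card ≤ (A ∩ B).card := by
  rcases h with h | h
  · rw [Finset.inter_eq_left.2 h]; exact min_le_left _ _
  · rw [Finset.inter_eq_right.2 h]; exact min_le_right _ _

theorem Finset.card_le_two_mul_card_inter_or {α : Type*} [DecidableEq α]
    {A B C : Finset α} (h : A ⊆ B ∪ C) :
    A.card ≤ 2 * (A ∩ B).card ∨ A.card ≤ 2 * (A ∩ C).card := by
  have hsplit : A.card ≤ (A ∩ B).card + (A ∩ C).card :=
    calc A.card = (A ∩ B ∪ A ∩ C).card := by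
          rw [← Finset.inter_union_distrib_left, Finset.inter_eq_left.2 h]
      _ ≤ _ := Finset.card_union_le _ _
  omega

namespace BTree

variable {X : Type} [DecidableEq X]

/-- Alternative (i) of the dichotomy, with the bound `N / C` replaced by `k`. -/
def CommonCluster (t s : BTree X) (k : ℝ) : Prop :=
  ∃ (pu pv : List Bool) (u v : BTree X) (x : X),
    t.subtreeAt pu = some u ∧ s.subtreeAt pv = some v ∧
    x ∈ t.leaves ∧ x ∉ u.leaves ∧ x ∉ v.leaves ∧ k ≤ ((u.leaves ∩ v.leaves).card : ℝ)

theorem CommonCluster.mono {t s : BTree X} {k k' : ℝ} (h : t.CommonCluster s k) (hk : k' ≤ k) :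
    t.CommonCluster s k' := by
  obtain ⟨pu, pv, u, v, x, hu, hv, hx, hxu, hxv, hkc⟩ := h
  exact ⟨pu, pv, u, v, x, hu, hv, hx, hxu, hxv, hk.trans hkc⟩

theorem CommonCluster.symm {t s : BTree X} {k : ℝ} (h : t.CommonCluster s k)
    (hts : t.leaves = s.leaves) : s.CommonCluster t k := by
  obtain ⟨pu, pv, u, v, x, hu, hv, hx, hxu, hxv, hkc⟩ := h
  exact ⟨pv, pu, v, u, x, hv, hu, hts ▸ hx, hxv, hxu, Finset.inter_comm u.leaves v.leaves ▸ hkc⟩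

theorem commonCluster_half_of_notMem {t l r u : BTree X} {p : List Bool}
    (hs : (node l r).Phylo) (hts : t.leaves = (node l r).leaves) (hu : t.subtreeAt p = some u)
    {y z : X} (hy : y ∈ l.leaves) (hyu : y ∉ u.leaves) (hz : z ∈ r.leaves) (hzu : z ∉ u.leaves) :
    t.CommonCluster (node l r) (u.leaves.card / 2) := by
  rw [leaves_node] at hts
  have hsub : u.leaves ⊆ l.leaves ∪ r.leaves := hts ▸ leaves_subset_of_subtreeAt hu
  rcases Finset.card_le_two_mul_card_inter_or hsub with h | h
  · refine ⟨p, [false], u, l, z, hu, by simp [subtreeAt], hts ▸ Finset.mem_union_right _ hz,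
      hzu, Finset.disjoint_right.1 hs.disjoint_leaves hz, ?_⟩
    rw [div_le_iff₀ two_pos]
    exact_mod_cast (by omega)
  · refine ⟨p, [true], u, r, y, hu, by simp [subtreeAt], hts ▸ Finset.mem_union_left _ hy,
      hyu, Finset.disjoint_left.1 hs.disjoint_leaves hy, ?_⟩
    rw [div_le_iff₀ two_pos]
    exact_mod_cast (by omega)

theorem commonCluster_of_mem_leftSpine {tl tr sl sr q : BTree X} (ht : (node tl tr).Phylo)
    (hseq : (node tl tr).seq = (node sl sr).seq) (hq : q ∈ tl.leftSpine)
    (hq₁ : 1 < q.leaves.card) :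
    (node tl tr).CommonCluster (node sl sr) (q.leaves.card / 2) := by
  obtain ⟨p, hp⟩ := exists_subtreeAt_of_mem_leftSpine hq
  have hs : (node sl sr).Phylo := ht.of_seq_eq hseq
  have hfirst : tl.firstLeaf = sl.firstLeaf := (firstLeaf_eq_of_seq_eq hseq :)
  have hlast : tr.lastLeaf = sr.lastLeaf := (lastLeaf_eq_of_seq_eq hseq :)
  refine commonCluster_half_of_notMem (p := false :: p) hs (congrArg List.toFinset hseq) hp
    (firstLeaf_mem_leaves sl) ?_ (lastLeaf_mem_leaves sr) ?_
  · rw [← hfirst]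
    exact firstLeaf_notMem_of_mem_leftSpine ht.left hq hq₁
  · rw [← hlast]
    exact fun h => Finset.disjoint_left.1 ht.disjoint_leaves (leaves_subset_of_subtreeAt hp h)
      (lastLeaf_mem_leaves tr)

theorem commonCluster_of_mem_rightSpine {tl tr sl sr q : BTree X} (ht : (node tl tr).Phylo)
    (hseq : (node tl tr).seq = (node sl sr).seq) (hq : q ∈ sr.rightSpine)
    (hq₁ : 1 < q.leaves.card) :
    (node tl tr).CommonCluster (node sl sr) (q.leaves.card / 2) := by
  obtain ⟨p, hp⟩ := exists_subtreeAt_of_mem_rightSpine hq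
  have hs : (node sl sr).Phylo := ht.of_seq_eq hseq
  have hfirst : tl.firstLeaf = sl.firstLeaf := (firstLeaf_eq_of_seq_eq hseq :)
  have hlast : tr.lastLeaf = sr.lastLeaf := (lastLeaf_eq_of_seq_eq hseq :)
  refine (commonCluster_half_of_notMem (p := true :: p) ht (congrArg List.toFinset hseq.symm) hp
    (firstLeaf_mem_leaves tl) ?_ (lastLeaf_mem_leaves tr) ?_).symm
    (congrArg List.toFinset hseq.symm)
  · rw [hfirst]
    exact fun h => Finset.disjoint_left.1 hs.disjoint_leaves (firstLeaf_mem_leaves sl)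
      (leaves_subset_of_subtreeAt hp h)
  · rw [hlast]
    exact lastLeaf_notMem_of_mem_rightSpine hs.right hq hq₁

theorem commonCluster_left_children {tl tr sl sr : BTree X} (ht : (node tl tr).Phylo)
    (hseq : (node tl tr).seq = (node sl sr).seq) :
    (node tl tr).CommonCluster (node sl sr) (min tl.leaves.card sl.leaves.card : ℕ) := by
  have hs : (node sl sr).Phylo := ht.of_seq_eq hseq
  have hlast : tr.lastLeaf = sr.lastLeaf := (lastLeaf_eq_of_seq_eq hseq :)
  have hnested : tl.leaves ⊆ sl.leaves ∨ sl.leaves ⊆ tl.leaves := by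
    have htl : tl.seq <+: (node tl tr).seq := List.prefix_append _ _
    have hsl : sl.seq <+: (node tl tr).seq := hseq ▸ List.prefix_append _ _
    rcases List.prefix_or_prefix_of_prefix htl hsl with h | h
    · exact Or.inl (leaves_subset_leaves h.subset)
    · exact Or.inr (leaves_subset_leaves h.subset)
  refine ⟨[false], [false], tl, sl, tr.lastLeaf, by simp [subtreeAt], by simp [subtreeAt],
    leaves_node tl tr ▸ Finset.mem_union_right _ (lastLeaf_mem_leaves tr),
    Finset.disjoint_right.1 ht.disjoint_leaves (lastLeaf_mem_leaves tr), ?_, ?_⟩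
  · rw [hlast]
    exact Finset.disjoint_right.1 hs.disjoint_leaves (lastLeaf_mem_leaves sr)
  · exact_mod_cast Finset.min_card_le_card_inter_of_subset_or hnested

theorem commonCluster_right_children {tl tr sl sr : BTree X} (ht : (node tl tr).Phylo)
    (hseq : (node tl tr).seq = (node sl sr).seq) :
    (node tl tr).CommonCluster (node sl sr) (min tr.leaves.card sr.leaves.card : ℕ) := by
  have hs : (node sl sr).Phylo := ht.of_seq_eq hseq
  have hfirst : tl.firstLeaf = sl.firstLeaf := (firstLeaf_eq_of_seq_eq hseq :)
  have hnested : tr.leaves ⊆ sr.leaves ∨ sr.leaves ⊆ tr.leaves := by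
    have htr : tr.seq <:+ (node tl tr).seq := List.suffix_append _ _
    have hsr : sr.seq <:+ (node tl tr).seq := hseq ▸ List.suffix_append _ _
    rcases List.suffix_or_suffix_of_suffix htr hsr with h | h
    · exact Or.inl (leaves_subset_leaves h.subset)
    · exact Or.inr (leaves_subset_leaves h.subset)
  refine ⟨[true], [true], tr, sr, tl.firstLeaf, by simp [subtreeAt], by simp [subtreeAt],
    leaves_node tl tr ▸ Finset.mem_union_left _ (firstLeaf_mem_leaves tl),
    Finset.disjoint_left.1 ht.disjoint_leaves (firstLeaf_mem_leaves tl), ?_, ?_⟩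
  · rw [hfirst]
    exact Finset.disjoint_left.1 hs.disjoint_leaves (firstLeaf_mem_leaves sl)
  · exact_mod_cast Finset.min_card_le_card_inter_of_subset_or hnested

end BTree

theorem spine_dichotomy_general {X : Type} [DecidableEq X]
    (t s tl tr : BTree X) (ht : t.Phylo) (hseq : t.seq = s.seq)
    (htn : t = BTree.node tl tr) (hbal : tr.size ≤ tl.size)
    (C : ℝ) (hC : 4 ≤ C) :
    (∃ (pu pv : List Bool) (u v : BTree X) (x : X),
      t.subtreeAt pu = some u ∧ s.subtreeAt pv = some v ∧
      x ∈ t.leaves ∧ x ∉ u.leaves ∧ x ∉ v.leaves ∧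
      (t.leaves.card : ℝ) / C ≤ ((u.leaves ∩ v.leaves).card : ℝ)) ∨
    (∀ q ∈ t.leftSpine ++ s.rightSpine,
      (q.leaves.card : ℝ) ≤ max (2 * (t.leaves.card : ℝ) / C) 1) := by
  subst htn
  obtain ⟨sl, sr, rfl⟩ := exists_eq_node_of_seq_eq hseq
  have hs := ht.of_seq_eq hseq
  set N : ℝ := ((node tl tr).leaves.card : ℝ) with hN
  have hNt : N = tl.leaves.card + tr.leaves.card := by
    rw [hN, ht.card_leaves_node, Nat.cast_add]
  have hNs : N = sl.leaves.card + sr.leaves.card := by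
    rw [hN, show (node tl tr).leaves = (node sl sr).leaves from congrArg List.toFinset hseq,
      hs.card_leaves_node, Nat.cast_add]
  have hbal' : (tr.leaves.card : ℝ) ≤ tl.leaves.card := by
    rw [ht.right.card_leaves, ht.left.card_leaves]; exact_mod_cast hbal
  have hk₀ : 0 ≤ N / C := by positivity
  have hk : N / C ≤ N / 2 := div_le_div_of_nonneg_left (by positivity) two_pos (by linarith)
  have hk₂ : 2 * N / C = 2 * (N / C) := mul_div_assoc _ _ _
  by_cases hsl : N / C ≤ sl.leaves.card
  · refine Or.inl ((commonCluster_left_children ht hseq).mono ?_)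
    push_cast
    exact le_min (by linarith) hsl
  refine or_iff_not_imp_right.2 fun hspine => ?_
  simp only [not_forall, not_le, max_lt_iff] at hspine
  obtain ⟨q, hq, hq_big, hq₁⟩ := hspine
  have hq₁' : 1 < q.leaves.card := by exact_mod_cast hq₁
  simp only [leftSpine, rightSpine, List.mem_append, List.mem_cons, List.not_mem_nil, or_false] at hq
  rcases hq with (hq | rfl) | rfl | hq
  · exact (commonCluster_of_mem_leftSpine ht hseq hq hq₁').mono (by linarith)
  · refine (commonCluster_right_children ht hseq).mono ?_
    push_cast
    exact le_min (by linarith) (by linarith)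
  · exact absurd (by linarith) hsl
  · exact (commonCluster_of_mem_rightSpine ht hseq hq hq₁').mono (by linarith)

/-- Lemma 3: let `t = node tl tr` and `s` be rooted binary trees on the same leaf
set of size `N ≥ 2` with identical pre-order leaf orderings, with the left
subtree of `t` at least as large as its right subtree, and let `C ≥ 4`.  Then
either (i) there are subtrees `u` of `t` and `v` of `s` and a leaf `x` outside
both with `|leaves(u) ∩ leaves(v)| ≥ N/C`, or (ii) every subtree hanging off the
left spine of `t` or the right spine of `s` has at most `max(2N/C, 1)` leaves. -/
theorem spine_dichotomy {X : Type} [DecidableEq X]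
    (t s tl tr : BTree X) (ht : t.Phylo) (hs : s.Phylo) (hseq : t.seq = s.seq)
    (htn : t = BTree.node tl tr) (hbal : tr.size ≤ tl.size)
    (hN : 2 ≤ t.leaves.card) (C : ℝ) (hC : 4 ≤ C) :
    (∃ (pu pv : List Bool) (u v : BTree X) (x : X),
      t.subtreeAt pu = some u ∧ s.subtreeAt pv = some v ∧
      x ∈ t.leaves ∧ x ∉ u.leaves ∧ x ∉ v.leaves ∧
      (t.leaves.card : ℝ) / C ≤ ((u.leaves ∩ v.leaves).card : ℝ)) ∨
    (∀ q ∈ t.leftSpine ++ s.rightSpine,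
      (q.leaves.card : ℝ) ≤ max (2 * (t.leaves.card : ℝ) / C) 1) :=
  spine_dichotomy_general t s tl tr ht hseq htn hbal C hC
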